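/- arXiv:2403.07906 — 14 statements merged into one kernel-verified Lean document; each statement's English description precedes it below -/
import Mathlib

section
/- Let (X,d) be a metric space with at least 3 points, let γ ∈ [0, 1/4), and let T : X → X be a generalized Chatterjea type mapping with constant γ. If x ∈ X is an accumulation point of X (every open ball centered at x contains infinitely many points of X) and T is continuous at x, then for every y ∈ X one has d(Tx,Ty) ≤ (γ/(1-γ))·(2·d(x,Ty) + d(y,Tx)). -/
/-- For a generalized Chatterjea type mapping with γ ∈ [0, 1/4), if x is an
accumulation point of X and T is continuous at x, then
d(Tx,Ty) ≤ (γ/(1-γ))·(2 d(x,Ty) + d(y,Tx)) for all y. -/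
theorem generalized_chatterjea_ineq_at_accumulation_point
    {X : Type*} [MetricSpace X]
    (h3 : ∃ x y z : X, x ≠ y ∧ x ≠ z ∧ y ≠ z)
    (γ : ℝ) (hγ0 : 0 ≤ γ) (hγ1 : γ < 1 / 4)
    (T : X → X)
    (hT : ∀ x y z : X, x ≠ y → x ≠ z → y ≠ z →
      dist (T x) (T y) + dist (T y) (T z) + dist (T x) (T z) ≤
        γ * (dist x (T y) + dist x (T z) + dist y (T x) + dist y (T z) +
             dist z (T x) + dist z (T y)))
    (x : X)
    (hacc : ∀ r : ℝ, 0 < r → (Metric.ball x r).Infinite)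
    (hcont : ContinuousAt T x) :
    ∀ y : X, dist (T x) (T y) ≤ γ / (1 - γ) * (2 * dist x (T y) + dist y (T x)) := by
  intro y
  have hγ1' : γ < 1 := by linarith
  by_cases hxy : y = x
  · subst hxy
    have h1 : (0:ℝ) ≤ γ / (1 - γ) := div_nonneg hγ0 (by linarith)
    have h2 : (0:ℝ) ≤ 2 * dist y (T y) + dist y (T y) := by positivity
    simp only [dist_self]
    exact mul_nonneg h1 h2
  · have key : 2 * dist (T x) (T y) ≤
        γ * (2 * dist x (T y) + 2 * dist y (T x) + 2 * dist x (T x)) := by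
      apply le_of_forall_pos_le_add
      intro ε hε
      obtain ⟨δ, hδ, hδ2⟩ := Metric.continuousAt_iff.mp hcont (ε / 5) (by linarith)
      have hr0 : 0 < min δ (ε / 5) := lt_min hδ (by linarith)
      obtain ⟨z, hzball, hzne⟩ :=
        ((hacc _ hr0).diff (Set.toFinite {x, y})).nonempty
      simp only [Set.mem_insert_iff, Set.mem_singleton_iff, not_or] at hzne
      obtain ⟨hzx, hzy⟩ := hzne
      have hzxd : dist z x < min δ (ε / 5) := Metric.mem_ball.mp hzball
      have hzε : dist z x < ε / 5 := lt_of_lt_of_le hzxd (min_le_right _ _)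
      have hTz : dist (T z) (T x) < ε / 5 :=
        hδ2 (lt_of_lt_of_le hzxd (min_le_left _ _))
      have H := hT x y z (fun h => hxy h.symm) (fun h => hzx h.symm) (fun h => hzy h.symm)
      have t1 : dist (T y) (T x) ≤ dist (T y) (T z) + dist (T z) (T x) := dist_triangle _ _ _
      have t2 : dist x (T z) ≤ dist x (T x) + dist (T x) (T z) := dist_triangle _ _ _
      have t3 : dist z (T x) ≤ dist z x + dist x (T x) := dist_triangle _ _ _
      have t4 : dist y (T z) ≤ dist y (T x) + dist (T x) (T z) := dist_triangle _ _ _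
      have t5 : dist z (T y) ≤ dist z x + dist x (T y) := dist_triangle _ _ _
      have e1 : dist (T x) (T z) = dist (T z) (T x) := dist_comm _ _
      have e2 : dist (T x) (T y) = dist (T y) (T x) := dist_comm _ _
      have n1 : (0:ℝ) ≤ dist (T x) (T z) := dist_nonneg
      have n2 : (0:ℝ) ≤ dist z x := dist_nonneg
      nlinarith [mul_nonneg hγ0 n2, mul_nonneg hγ0 n1,
        mul_le_of_le_one_left n2 hγ1'.le, mul_le_of_le_one_left n1 hγ1'.le]
    have tx : dist x (T x) ≤ dist x (T y) + dist (T y) (T x) := dist_triangle _ _ _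
    have e2 : dist (T y) (T x) = dist (T x) (T y) := dist_comm _ _
    rw [div_mul_eq_mul_div, le_div_iff₀ (by linarith : (0:ℝ) < 1 - γ)]
    nlinarith
end

section
/- Let (X,d) be a metric space with at least 3 points in which every point is an accumulation point of X, let γ ∈ [0, 1/4), and let T : X → X be a continuous generalized Chatterjea type mapping with constant γ. Then T is a Chatterjea type mapping with constant 3γ/(2(1-γ)), i.e., d(Tx,Ty) ≤ (3γ/(2(1-γ)))·(d(x,Ty) + d(y,Tx)) for all x, y ∈ X, where 3γ/(2(1-γ)) ∈ [0, 1/2). -/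
/-- Key intermediate estimate: for distinct `x y`,
`d(Tx,Ty) ≤ γ (d(x,Ty) + d(y,Tx) + d(x,Tx))`, obtained by letting `z → x`. -/
theorem gen_chatterjea_key
    {X : Type*} [MetricSpace X]
    (γ : ℝ) (hγ0 : 0 ≤ γ) (hγ1 : γ < 1 / 4)
    (T : X → X)
    (hT : ∀ x y z : X, x ≠ y → x ≠ z → y ≠ z →
      dist (T x) (T y) + dist (T y) (T z) + dist (T x) (T z) ≤
        γ * (dist x (T y) + dist x (T z) + dist y (T x) + dist y (T z) +
             dist z (T x) + dist z (T y)))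
    (hacc : ∀ x : X, ∀ r : ℝ, 0 < r → (Metric.ball x r).Infinite)
    (hcont : Continuous T) (x y : X) (hxy : x ≠ y) :
    dist (T x) (T y) ≤ γ * (dist x (T y) + dist y (T x) + dist x (T x)) := by
  apply le_of_forall_pos_le_add
  intro ε hε
  -- continuity of T at x
  obtain ⟨δ, hδ0, hδ⟩ := Metric.continuous_iff.mp hcont x ε hε
  set r := min δ ε with hr
  have hr0 : 0 < r := lt_min hδ0 hε
  -- pick z in the ball, distinct from x and y
  have hinf := hacc x r hr0
  have : ((Metric.ball x r) \ {x, y}).Nonempty := by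
    apply Set.Infinite.nonempty
    apply Set.Infinite.diff hinf
    exact (Set.finite_singleton y).insert x
  obtain ⟨z, hzball, hznot⟩ := this
  have hzx : z ≠ x := fun h => hznot (by simp [h])
  have hzy : z ≠ y := fun h => hznot (by simp [h])
  have hdzx : dist z x < r := Metric.mem_ball.mp hzball
  have hdzxε : dist z x < ε := lt_of_lt_of_le hdzx (min_le_right _ _)
  have hTz : dist (T z) (T x) < ε := hδ z (lt_of_lt_of_le hdzx (min_le_left _ _))
  have key := hT x y z hxy (Ne.symm hzx) (Ne.symm hzy)
  -- triangle inequalities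
  have t1 : dist (T x) (T y) ≤ dist (T y) (T z) + dist (T x) (T z) := by
    rw [dist_comm (T y) (T z)]
    have := dist_triangle (T x) (T z) (T y)
    rw [dist_comm (T z) (T y)] at this
    linarith [dist_triangle (T x) (T z) (T y), dist_comm (T z) (T y)]
  have t2 : dist x (T z) ≤ dist x (T x) + ε := by
    have := dist_triangle x (T x) (T z)
    rw [dist_comm (T x) (T z)] at this
    linarith [this, hTz]
  have t3 : dist y (T z) ≤ dist y (T x) + ε := by
    have := dist_triangle y (T x) (T z)
    rw [dist_comm (T x) (T z)] at this
    linarith [this, hTz]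
  have t4 : dist z (T x) ≤ dist x (T x) + ε := by
    have := dist_triangle z x (T x)
    linarith [this, hdzxε]
  have t5 : dist z (T y) ≤ dist x (T y) + ε := by
    have := dist_triangle z x (T y)
    linarith [this, hdzxε]
  -- combine: 2 d(Tx,Ty) ≤ γ(2A + 2B + 2C + 4ε)
  nlinarith [key, t1, t2, t3, t4, t5, dist_nonneg (x := T x) (y := T z), hγ0, hγ1, hε.le]

/-- If every point of X is an accumulation point, T is continuous and is a
generalized Chatterjea type mapping with γ ∈ [0, 1/4), then T is a Chatterjea type mapping
with constant 3γ/(2(1-γ)) ∈ [0, 1/2). -/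
theorem generalized_chatterjea_implies_chatterjea
    {X : Type*} [MetricSpace X]
    (h3 : ∃ x y z : X, x ≠ y ∧ x ≠ z ∧ y ≠ z)
    (γ : ℝ) (hγ0 : 0 ≤ γ) (hγ1 : γ < 1 / 4)
    (T : X → X)
    (hT : ∀ x y z : X, x ≠ y → x ≠ z → y ≠ z →
      dist (T x) (T y) + dist (T y) (T z) + dist (T x) (T z) ≤
        γ * (dist x (T y) + dist x (T z) + dist y (T x) + dist y (T z) +
             dist z (T x) + dist z (T y)))
    (hacc : ∀ x : X, ∀ r : ℝ, 0 < r → (Metric.ball x r).Infinite)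
    (hcont : Continuous T) :
    (0 ≤ 3 * γ / (2 * (1 - γ)) ∧ 3 * γ / (2 * (1 - γ)) < 1 / 2) ∧
    ∀ x y : X, dist (T x) (T y) ≤
      3 * γ / (2 * (1 - γ)) * (dist x (T y) + dist y (T x)) := by
  have h1γ : (0:ℝ) < 1 - γ := by linarith
  have hc0 : 0 ≤ 3 * γ / (2 * (1 - γ)) := by positivity
  have hc1 : 3 * γ / (2 * (1 - γ)) < 1 / 2 := by
    rw [div_lt_iff₀ (by linarith)]
    linarith
  refine ⟨⟨hc0, hc1⟩, fun x y => ?_⟩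
  by_cases hxy : x = y
  · subst hxy
    simp only [dist_self]
    exact mul_nonneg hc0 (by positivity)
  · have k1 := gen_chatterjea_key γ hγ0 hγ1 T hT hacc hcont x y hxy
    have k2 := gen_chatterjea_key γ hγ0 hγ1 T hT hacc hcont y x (Ne.symm hxy)
    rw [dist_comm (T y) (T x)] at k2
    have t1 : dist x (T x) ≤ dist x (T y) + dist (T x) (T y) := by
      have := dist_triangle x (T y) (T x)
      rw [dist_comm (T y) (T x)] at this
      linarith
    have t2 : dist y (T y) ≤ dist y (T x) + dist (T x) (T y) := by
      have := dist_triangle y (T x) (T y)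
      linarith
    rw [div_mul_eq_mul_div, le_div_iff₀ (by linarith)]
    nlinarith [k1, k2, t1, t2, hγ0]
end

section
/- Let (X,d) be a metric space with at least 3 points, let α ∈ [0, 1/4), and let T : X → X be a mapping contracting perimeters of triangles with constant α. Then T is a generalized Chatterjea type mapping with constant γ = α/(1-α) ∈ [0, 1/3), i.e., d(Tx,Ty) + d(Ty,Tz) + d(Tx,Tz) ≤ (α/(1-α))·(d(x,Ty) + d(x,Tz) + d(y,Tx) + d(y,Tz) + d(z,Tx) + d(z,Ty)) for all three pairwise distinct points x, y, z ∈ X. -/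
/-- A mapping contracting perimeters of triangles with constant α ∈ [0, 1/4)
is a generalized Chatterjea type mapping with constant α/(1-α) ∈ [0, 1/3). -/
theorem contracting_perimeters_implies_generalized_chatterjea
    {X : Type*} [MetricSpace X]
    (h3 : ∃ x y z : X, x ≠ y ∧ x ≠ z ∧ y ≠ z)
    (α : ℝ) (hα0 : 0 ≤ α) (hα1 : α < 1 / 4)
    (T : X → X)
    (hT : ∀ x y z : X, x ≠ y → x ≠ z → y ≠ z →
      dist (T x) (T y) + dist (T y) (T z) + dist (T x) (T z) ≤
        α * (dist x y + dist y z + dist x z)) :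
    (0 ≤ α / (1 - α) ∧ α / (1 - α) < 1 / 3) ∧
    ∀ x y z : X, x ≠ y → x ≠ z → y ≠ z →
      dist (T x) (T y) + dist (T y) (T z) + dist (T x) (T z) ≤
        α / (1 - α) * (dist x (T y) + dist x (T z) + dist y (T x) + dist y (T z) +
                       dist z (T x) + dist z (T y)) := by
  have h1α : (0:ℝ) < 1 - α := by linarith
  refine ⟨⟨div_nonneg hα0 h1α.le, by rw [div_lt_iff₀ h1α]; linarith⟩, ?_⟩
  intro x y z hxy hxz hyz
  have hS := hT x y z hxy hxz hyz
  have t1 : dist x y ≤ dist x (T y) + dist (T y) (T x) + dist (T x) y := by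
    have := dist_triangle4 x (T y) (T x) y
    simpa [dist_comm] using this
  have t2 : dist y z ≤ dist y (T z) + dist (T z) (T y) + dist (T y) z := by
    have := dist_triangle4 y (T z) (T y) z
    simpa [dist_comm] using this
  have t3 : dist x z ≤ dist x (T z) + dist (T z) (T x) + dist (T x) z := by
    have := dist_triangle4 x (T z) (T x) z
    simpa [dist_comm] using this
  rw [div_mul_eq_mul_div, le_div_iff₀ h1α]
  have e1 : dist (T y) (T x) = dist (T x) (T y) := dist_comm _ _
  have e2 : dist (T z) (T y) = dist (T y) (T z) := dist_comm _ _
  have e3 : dist (T z) (T x) = dist (T x) (T z) := dist_comm _ _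
  have e4 : dist (T x) y = dist y (T x) := dist_comm _ _
  have e5 : dist (T y) z = dist z (T y) := dist_comm _ _
  have e6 : dist (T x) z = dist z (T x) := dist_comm _ _
  nlinarith [hS, t1, t2, t3]
end

section
/- Let (X,d) be a metric space with at least 3 points, let λ ∈ [0, 2/5), and let T : X → X be a generalized Kannan type mapping with constant λ. Then T is a generalized Chatterjea type mapping with constant γ = λ/(2(1-λ)) ∈ [0, 1/3), i.e., d(Tx,Ty) + d(Ty,Tz) + d(Tx,Tz) ≤ (λ/(2(1-λ)))·(d(x,Ty) + d(x,Tz) + d(y,Tx) + d(y,Tz) + d(z,Tx) + d(z,Ty)) for all three pairwise distinct points x, y, z ∈ X. -/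
/-- A generalized Kannan type mapping with constant λ ∈ [0, 2/5) is a
generalized Chatterjea type mapping with constant λ/(2(1-λ)) ∈ [0, 1/3). -/
theorem generalized_kannan_implies_generalized_chatterjea
    {X : Type*} [MetricSpace X]
    (h3 : ∃ x y z : X, x ≠ y ∧ x ≠ z ∧ y ≠ z)
    (lam : ℝ) (hlam0 : 0 ≤ lam) (hlam1 : lam < 2 / 5)
    (T : X → X)
    (hT : ∀ x y z : X, x ≠ y → x ≠ z → y ≠ z →
      dist (T x) (T y) + dist (T y) (T z) + dist (T x) (T z) ≤
        lam * (dist x (T x) + dist y (T y) + dist z (T z))) :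
    (0 ≤ lam / (2 * (1 - lam)) ∧ lam / (2 * (1 - lam)) < 1 / 3) ∧
    ∀ x y z : X, x ≠ y → x ≠ z → y ≠ z →
      dist (T x) (T y) + dist (T y) (T z) + dist (T x) (T z) ≤
        lam / (2 * (1 - lam)) * (dist x (T y) + dist x (T z) + dist y (T x) +
                                 dist y (T z) + dist z (T x) + dist z (T y)) := by
  have h1 : (0:ℝ) < 1 - lam := by linarith
  have h2 : (0:ℝ) < 2 * (1 - lam) := by linarith
  refine ⟨⟨div_nonneg hlam0 (le_of_lt h2), by rw [div_lt_iff₀ h2]; linarith⟩, ?_⟩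
  intro x y z hxy hxz hyz
  have hK := hT x y z hxy hxz hyz
  have t1 := dist_triangle x (T y) (T x)
  have t2 := dist_triangle x (T z) (T x)
  have t3 := dist_triangle y (T x) (T y)
  have t4 := dist_triangle y (T z) (T y)
  have t5 := dist_triangle z (T x) (T z)
  have t6 := dist_triangle z (T y) (T z)
  have s1 : dist (T y) (T x) = dist (T x) (T y) := dist_comm _ _
  have s2 : dist (T z) (T x) = dist (T x) (T z) := dist_comm _ _
  have s3 : dist (T z) (T y) = dist (T y) (T z) := dist_comm _ _
  rw [div_mul_eq_mul_div, le_div_iff₀ h2]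
  nlinarith [dist_nonneg (α := X) (x := T x) (y := T y),
    dist_nonneg (α := X) (x := T y) (y := T z),
    dist_nonneg (α := X) (x := T x) (y := T z)]
end

section
/- Let (X,d) be a complete metric space with at least 3 points and let T : X → X be a generalized Chatterjea type mapping (with some constant γ ∈ [0, 1/3)) that has no periodic points of prime period 2 (i.e., for every x ∈ X, T(Tx) = x implies Tx = x). Then T has a fixed point, and the set of fixed points of T has at most two elements. -/
/-- A generalized Chatterjea type mapping on a complete metric space with at
least 3 points, having no periodic points of prime period 2, has a fixed point; the set of
fixed points has at most two elements. -/
theorem generalized_chatterjea_fixed_point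
    {X : Type*} [MetricSpace X] [CompleteSpace X]
    (h3 : ∃ x y z : X, x ≠ y ∧ x ≠ z ∧ y ≠ z)
    (T : X → X)
    (hper : ∀ x : X, T (T x) = x → T x = x)
    (γ : ℝ) (hγ0 : 0 ≤ γ) (hγ1 : γ < 1 / 3)
    (hT : ∀ x y z : X, x ≠ y → x ≠ z → y ≠ z →
      dist (T x) (T y) + dist (T y) (T z) + dist (T x) (T z) ≤
        γ * (dist x (T y) + dist x (T z) + dist y (T x) + dist y (T z) +
             dist z (T x) + dist z (T y))) :
    (∃ x : X, T x = x) ∧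
    (∀ x y z : X, T x = x → T y = y → T z = z → x = y ∨ x = z ∨ y = z) := by
  constructor
  · -- existence of a fixed point
    obtain ⟨x0, -⟩ := h3
    set f : ℕ → X := fun n => T^[n] x0 with hfdef
    have e : ∀ n, T (f n) = f (n+1) := fun n =>
      (Function.iterate_succ_apply' T n x0).symm
    by_cases hfix : ∃ n, T (f n) = f n
    · obtain ⟨n, hn⟩ := hfix; exact ⟨f n, hn⟩
    push_neg at hfix
    have h1 : ∀ n, f n ≠ f (n+1) := fun n h => hfix n (by rw [e n]; exact h.symm)
    have h2 : ∀ n, f n ≠ f (n+2) := by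
      intro n h
      have ht : T (T (f n)) = f n := by rw [e n, e (n+1)]; exact h.symm
      exact hfix n (hper (f n) ht)
    have h1γ : (0:ℝ) < 1 - γ := by linarith
    -- key contraction inequality
    have key : ∀ n, (1-γ) * (dist (f (n+1)) (f (n+2)) + dist (f (n+2)) (f (n+3))) ≤
        2*γ * (dist (f n) (f (n+1)) + dist (f (n+1)) (f (n+2))) := by
      intro n
      have hd := hT (f n) (f (n+1)) (f (n+2)) (h1 n) (h2 n) (h1 (n+1))
      simp only [e, dist_self, show n+1+1 = n+2 from rfl, show n+2+1 = n+3 from rfl,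
        add_zero, zero_add] at hd
      have t1 : dist (f n) (f (n+2)) ≤ dist (f n) (f (n+1)) + dist (f (n+1)) (f (n+2)) :=
        dist_triangle _ _ _
      have t2 : dist (f n) (f (n+3)) ≤ dist (f n) (f (n+2)) + dist (f (n+2)) (f (n+3)) :=
        dist_triangle _ _ _
      have dc : dist (f (n+2)) (f (n+1)) = dist (f (n+1)) (f (n+2)) := dist_comm _ _
      have nn : (0:ℝ) ≤ dist (f (n+1)) (f (n+3)) := dist_nonneg
      have hs : γ * (dist (f n) (f (n+2)) + dist (f n) (f (n+3)) + dist (f (n+1)) (f (n+3))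
            + dist (f (n+2)) (f (n+1))) ≤
          γ * (2 * dist (f n) (f (n+1)) + 3 * dist (f (n+1)) (f (n+2))
            + dist (f (n+2)) (f (n+3)) + dist (f (n+1)) (f (n+3))) := by
        apply mul_le_mul_of_nonneg_left _ hγ0
        linarith
      have hg : γ * dist (f (n+1)) (f (n+3)) ≤ 1 * dist (f (n+1)) (f (n+3)) :=
        mul_le_mul_of_nonneg_right (by linarith) nn
      nlinarith [hd, hs, hg]
    set C : ℝ := dist (f 0) (f 1) + dist (f 1) (f 2) with hC
    set r : ℝ := 2*γ/(1-γ) with hr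
    have hr0 : 0 ≤ r := div_nonneg (by linarith) h1γ.le
    have hr1 : r < 1 := by rw [hr, div_lt_one h1γ]; linarith
    have hstep : ∀ n, dist (f (n+1)) (f (n+2)) + dist (f (n+2)) (f (n+3)) ≤
        r * (dist (f n) (f (n+1)) + dist (f (n+1)) (f (n+2))) := by
      intro n
      rw [hr, div_mul_eq_mul_div, le_div_iff₀ h1γ]
      nlinarith [key n]
    have geo : ∀ n, dist (f n) (f (n+1)) + dist (f (n+1)) (f (n+2)) ≤ C * r ^ n := by
      intro n
      induction n with
      | zero => simp [hC]
      | succ n ih =>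
        show dist (f (n+1)) (f (n+2)) + dist (f (n+2)) (f (n+3)) ≤ C * r ^ (n+1)
        calc dist (f (n+1)) (f (n+2)) + dist (f (n+2)) (f (n+3))
            ≤ r * (dist (f n) (f (n+1)) + dist (f (n+1)) (f (n+2))) := hstep n
          _ ≤ r * (C * r ^ n) := mul_le_mul_of_nonneg_left ih hr0
          _ = C * r ^ (n+1) := by ring
    have hcauchy : CauchySeq f :=
      cauchySeq_of_le_geometric r C hr1 (fun n =>
        le_trans (le_add_of_nonneg_right dist_nonneg) (geo n))
    obtain ⟨p, hp⟩ := cauchySeq_tendsto_of_complete hcauchy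
    refine ⟨p, ?_⟩
    by_contra hTp
    have hD : 0 < dist p (T p) := dist_pos.2 fun h => hTp h.symm
    set D : ℝ := dist p (T p) with hDdef
    obtain ⟨N, hN⟩ := Metric.tendsto_atTop.mp hp (D/100) (by linarith)
    have hnep : ∀ n, N ≤ n → f n ≠ p := by
      intro n hn h
      have h1' := hN (n+1) (by omega)
      rw [← e n, h] at h1'
      rw [dist_comm] at h1'
      rw [← hDdef] at h1'
      linarith
    have hd := hT (f N) (f (N+1)) p (h1 N) (hnep N le_rfl) (hnep (N+1) (by omega))
    simp only [e, show N+1+1 = N+2 from rfl] at hd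
    have b0 : dist (f N) p < D/100 := hN N le_rfl
    have b1 : dist (f (N+1)) p < D/100 := hN (N+1) (by omega)
    have b2 : dist (f (N+2)) p < D/100 := hN (N+2) (by omega)
    -- lower bound for dist (f (N+2)) (T p)
    have l1 : D ≤ dist p (f (N+2)) + dist (f (N+2)) (T p) := dist_triangle _ _ _
    have c0 : dist p (f (N+2)) = dist (f (N+2)) p := dist_comm _ _
    have c1 : dist p (f (N+1)) = dist (f (N+1)) p := dist_comm _ _
    -- upper bounds for the right-hand side terms
    have u1 : dist (f N) (f (N+2)) ≤ dist (f N) p + dist p (f (N+2)) := dist_triangle _ _ _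
    have u2 : dist (f N) (T p) ≤ dist (f N) p + D := dist_triangle _ _ _
    have u3 : dist (f (N+1)) (T p) ≤ dist (f (N+1)) p + D := dist_triangle _ _ _
    have u4 : dist (f (N+1)) (f (N+1)) = 0 := dist_self _
    have nn1 : (0:ℝ) ≤ dist (f (N+1)) (f (N+2)) := dist_nonneg
    have nn2 : (0:ℝ) ≤ dist (f (N+1)) (T p) := dist_nonneg
    have hsum : dist (f N) (f (N+2)) + dist (f N) (T p) + dist (f (N+1)) (f (N+1)) +
        dist (f (N+1)) (T p) + dist p (f (N+1)) + dist p (f (N+2)) ≤ 2*D + 6*(D/100) := by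
      linarith
    have hmul : γ * (dist (f N) (f (N+2)) + dist (f N) (T p) + dist (f (N+1)) (f (N+1)) +
        dist (f (N+1)) (T p) + dist p (f (N+1)) + dist p (f (N+2))) ≤
        (1/3) * (2*D + 6*(D/100)) := by
      calc γ * _ ≤ γ * (2*D + 6*(D/100)) := mul_le_mul_of_nonneg_left hsum hγ0
        _ ≤ (1/3) * (2*D + 6*(D/100)) := by nlinarith
    linarith
  · -- at most two fixed points
    intro x y z hx hy hz
    by_contra hne
    push_neg at hne
    obtain ⟨hxy, hxz, hyz⟩ := hne
    have hd := hT x y z hxy hxz hyz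
    rw [hx, hy, hz] at hd
    have d1 : 0 < dist x y := dist_pos.2 hxy
    have c1 : dist y x = dist x y := dist_comm _ _
    have c2 : dist z x = dist x z := dist_comm _ _
    have c3 : dist z y = dist y z := dist_comm _ _
    have n2 : (0:ℝ) ≤ dist x z := dist_nonneg
    have n3 : (0:ℝ) ≤ dist y z := dist_nonneg
    nlinarith [hd]
end

section
/- Let (X,d) be a metric space with at least 3 points and let T : X → X be a generalized Chatterjea type mapping (with some constant γ ∈ [0, 1/3)). Then T cannot have three pairwise distinct fixed points; that is, the set of fixed points of T has at most two elements. -/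
/-- A generalized Chatterjea type mapping cannot have three pairwise distinct
fixed points. -/
theorem generalized_chatterjea_at_most_two_fixed_points
    {X : Type*} [MetricSpace X]
    (h3 : ∃ x y z : X, x ≠ y ∧ x ≠ z ∧ y ≠ z)
    (T : X → X)
    (γ : ℝ) (hγ0 : 0 ≤ γ) (hγ1 : γ < 1 / 3)
    (hT : ∀ x y z : X, x ≠ y → x ≠ z → y ≠ z →
      dist (T x) (T y) + dist (T y) (T z) + dist (T x) (T z) ≤
        γ * (dist x (T y) + dist x (T z) + dist y (T x) + dist y (T z) +
             dist z (T x) + dist z (T y))) :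
    ∀ x y z : X, T x = x → T y = y → T z = z → x = y ∨ x = z ∨ y = z := by
  intro x y z hx hy hz
  by_contra h
  push_neg at h
  obtain ⟨hxy, hxz, hyz⟩ := h
  have key := hT x y z hxy hxz hyz
  rw [hx, hy, hz] at key
  have hS : 0 < dist x y + dist y z + dist x z := by
    have := dist_pos.mpr hxy
    have := dist_pos.mpr hyz
    have h2 := dist_pos.mpr hxz
    linarith
  have : dist y x = dist x y := dist_comm y x
  have : dist z x = dist x z := dist_comm z x
  have : dist z y = dist y z := dist_comm z y
  nlinarith [dist_comm y x, dist_comm z x, dist_comm z y]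
end

section
/- Let (X,d) be a metric space with at least 3 points and let T : X → X be a generalized Chatterjea type mapping (with some constant γ ∈ [0, 1/3)). Suppose x* ∈ X is a fixed point of T and there exists x₀ ∈ X such that the iteration sequence x₀, x₁ = Tx₀, x₂ = Tx₁, … converges to x* and satisfies xₙ ≠ x* for all n ≥ 1. Then x* is the unique fixed point of T. -/
/-- If a generalized Chatterjea type mapping has a fixed point x* which is a
limit of an iteration sequence all of whose terms (from index 1 on) differ from x*, then x*
is the unique fixed point. -/
theorem generalized_chatterjea_unique_fixed_point_of_iterates
    {X : Type*} [MetricSpace X]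
    (h3 : ∃ x y z : X, x ≠ y ∧ x ≠ z ∧ y ≠ z)
    (T : X → X)
    (γ : ℝ) (hγ0 : 0 ≤ γ) (hγ1 : γ < 1 / 3)
    (hT : ∀ x y z : X, x ≠ y → x ≠ z → y ≠ z →
      dist (T x) (T y) + dist (T y) (T z) + dist (T x) (T z) ≤
        γ * (dist x (T y) + dist x (T z) + dist y (T x) + dist y (T z) +
             dist z (T x) + dist z (T y)))
    (xstar : X) (hfix : T xstar = xstar)
    (x : ℕ → X)
    (hiter : ∀ n : ℕ, x (n + 1) = T (x n))
    (hlim : Filter.Tendsto x Filter.atTop (nhds xstar))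
    (hne : ∀ n : ℕ, 1 ≤ n → x n ≠ xstar) :
    ∀ y : X, T y = y → y = xstar := by
  intro y hy
  by_contra hxy
  have hd : 0 < dist xstar y := dist_pos.mpr (fun h => hxy h.symm)
  -- x n eventually ≠ y
  have hney : ∀ᶠ n in Filter.atTop, x n ≠ y := by
    have : {z : X | z ≠ y} ∈ nhds xstar := isOpen_ne.mem_nhds (fun h => hxy h.symm)
    exact hlim.eventually this
  have hlim' : Filter.Tendsto (fun n => x (n + 1)) Filter.atTop (nhds xstar) :=
    hlim.comp (Filter.tendsto_add_atTop_nat 1)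
  set d := dist xstar y with hdd
  -- the two sequences
  have hkey : ∀ᶠ n in Filter.atTop,
      (dist xstar y + dist y (x (n+1)) + dist xstar (x (n+1))) ≤
      γ * (dist xstar y + dist xstar (x (n+1)) + dist y xstar + dist y (x (n+1)) +
           dist (x n) xstar + dist (x n) y) := by
    filter_upwards [hney, Filter.eventually_ge_atTop 1] with n hny hn1
    have h := hT xstar y (x n) (fun h => hxy h.symm) (fun h => (hne n hn1) h.symm) hny.symm
    rw [hfix, hy, ← hiter n] at h
    exact h
  have hL : Filter.Tendsto
      (fun n => dist xstar y + dist y (x (n+1)) + dist xstar (x (n+1)))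
      Filter.atTop (nhds (d + dist y xstar + dist xstar xstar)) := by
    exact ((tendsto_const_nhds.add (tendsto_const_nhds.dist hlim')).add
      (tendsto_const_nhds.dist hlim'))
  have hR : Filter.Tendsto
      (fun n => γ * (dist xstar y + dist xstar (x (n+1)) + dist y xstar + dist y (x (n+1)) +
           dist (x n) xstar + dist (x n) y))
      Filter.atTop (nhds (γ * (d + dist xstar xstar + dist y xstar + dist y xstar + dist xstar xstar + dist xstar y))) := by
    refine tendsto_const_nhds.mul ?_
    have h1 : Filter.Tendsto (fun n => dist xstar (x (n+1))) Filter.atTop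
        (nhds (dist xstar xstar)) := tendsto_const_nhds.dist hlim'
    have h2 : Filter.Tendsto (fun n => dist y (x (n+1))) Filter.atTop (nhds (dist y xstar)) :=
      tendsto_const_nhds.dist hlim'
    have h3' : Filter.Tendsto (fun n => dist (x n) xstar) Filter.atTop
        (nhds (dist xstar xstar)) := hlim.dist tendsto_const_nhds
    have h4 : Filter.Tendsto (fun n => dist (x n) y) Filter.atTop (nhds (dist xstar y)) :=
      hlim.dist tendsto_const_nhds
    exact ((((tendsto_const_nhds.add h1).add tendsto_const_nhds).add h2).add h3').add h4
  have hle := le_of_tendsto_of_tendsto hL hR hkey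
  rw [dist_comm y xstar, dist_self] at hle
  nlinarith [hd]
end

section
/- Let (X,d) be a complete metric space with at least 3 points and let T : X → X be an asymptotically regular generalized Chatterjea type mapping (with some constant γ ∈ [0, 1/3)), i.e., additionally d(T^{n+1}(x), T^n(x)) → 0 as n → ∞ for every x ∈ X. Then T has a fixed point, and the set of fixed points of T has at most two elements. -/
/-- An asymptotically regular generalized Chatterjea type mapping on a
complete metric space with at least 3 points has a fixed point; the set of fixed points
has at most two elements. -/
theorem asymptotically_regular_generalized_chatterjea_fixed_point
    {X : Type*} [MetricSpace X] [CompleteSpace X]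
    (h3 : ∃ x y z : X, x ≠ y ∧ x ≠ z ∧ y ≠ z)
    (T : X → X)
    (γ : ℝ) (hγ0 : 0 ≤ γ) (hγ1 : γ < 1 / 3)
    (hT : ∀ x y z : X, x ≠ y → x ≠ z → y ≠ z →
      dist (T x) (T y) + dist (T y) (T z) + dist (T x) (T z) ≤
        γ * (dist x (T y) + dist x (T z) + dist y (T x) + dist y (T z) +
             dist z (T x) + dist z (T y)))
    (hreg : ∀ x : X,
      Filter.Tendsto (fun n : ℕ => dist (T^[n + 1] x) (T^[n] x)) Filter.atTop (nhds 0)) :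
    (∃ x : X, T x = x) ∧
    (∀ x y z : X, T x = x → T y = y → T z = z → x = y ∨ x = z ∨ y = z) := by
  constructor
  · -- existence
    obtain ⟨x0, y0, z0, -, -, -⟩ := h3
    by_cases hfix : ∃ n : ℕ, T^[n + 1] x0 = T^[n] x0
    · obtain ⟨n, hn⟩ := hfix
      exact ⟨T^[n] x0, (Function.iterate_succ_apply' T n x0).symm.trans hn⟩
    push_neg at hfix
    have hcons : ∀ n : ℕ, T^[n + 1] x0 ≠ T^[n] x0 := hfix
    have h2m4 : (0:ℝ) < 2 - 4 * γ := by linarith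
    set C : ℝ := (2 * γ + 1) / (2 - 4 * γ) with hCdef
    have hChalf : (1:ℝ)/2 ≤ C := by
      rw [hCdef, le_div_iff₀ h2m4]; linarith
    have Cpos : (0:ℝ) < C := by linarith
    have key : ∀ n m : ℕ, dist (T^[n + 1] x0) (T^[m + 1] x0) ≤
        C * (dist (T^[n + 1] x0) (T^[n] x0) + dist (T^[n + 2] x0) (T^[n + 1] x0) +
             dist (T^[m + 1] x0) (T^[m] x0)) := by
      intro n m
      have e1 : T^[n + 1] x0 = T (T^[n] x0) := Function.iterate_succ_apply' T n x0
      have e2 : T^[n + 2] x0 = T (T^[n + 1] x0) := Function.iterate_succ_apply' T (n + 1) x0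
      have e3 : T^[m + 1] x0 = T (T^[m] x0) := Function.iterate_succ_apply' T m x0
      by_cases h1 : T^[n] x0 = T^[m] x0
      · have e4 : T^[n + 1] x0 = T^[m + 1] x0 := by rw [e1, e3, h1]
        rw [e4, dist_self]
        have : (0:ℝ) ≤ dist (T^[m + 1] x0) (T^[n] x0) + dist (T^[n + 2] x0) (T^[m + 1] x0) +
            dist (T^[m + 1] x0) (T^[m] x0) := by positivity
        nlinarith
      · by_cases h2 : T^[m] x0 = T^[n + 1] x0
        · have e4 : T^[m + 1] x0 = T^[n + 2] x0 := by rw [e3, h2, ← e2]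
          rw [e4, h2]
          have hd : dist (T^[n + 1] x0) (T^[n + 2] x0) = dist (T^[n + 2] x0) (T^[n + 1] x0) :=
            dist_comm _ _
          have h5 : (0:ℝ) ≤ C * dist (T^[n + 1] x0) (T^[n] x0) :=
            mul_nonneg Cpos.le dist_nonneg
          have h6 : (0:ℝ) ≤ (2 * C - 1) * dist (T^[n + 2] x0) (T^[n + 1] x0) :=
            mul_nonneg (by linarith) dist_nonneg
          nlinarith [h5, h6, hd]
        · have h := hT (T^[n] x0) (T^[m] x0) (T^[n + 1] x0) h1 (hcons n).symm h2
          rw [← e1, ← e2, ← e3] at h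
          have t1 : dist (T^[n + 1] x0) (T^[m + 1] x0) ≤
              dist (T^[n + 1] x0) (T^[n + 2] x0) + dist (T^[n + 2] x0) (T^[m + 1] x0) :=
            dist_triangle _ _ _
          have t2 : dist (T^[n] x0) (T^[m + 1] x0) ≤
              dist (T^[n] x0) (T^[n + 1] x0) + dist (T^[n + 1] x0) (T^[m + 1] x0) :=
            dist_triangle _ _ _
          have t3 : dist (T^[n] x0) (T^[n + 2] x0) ≤
              dist (T^[n] x0) (T^[n + 1] x0) + dist (T^[n + 1] x0) (T^[n + 2] x0) :=
            dist_triangle _ _ _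
          have t4 : dist (T^[m] x0) (T^[n + 1] x0) ≤
              dist (T^[m] x0) (T^[m + 1] x0) + dist (T^[m + 1] x0) (T^[n + 1] x0) :=
            dist_triangle _ _ _
          have t5 : dist (T^[m] x0) (T^[n + 2] x0) ≤
              dist (T^[m] x0) (T^[m + 1] x0) + dist (T^[m + 1] x0) (T^[n + 2] x0) :=
            dist_triangle _ _ _
          have t6 : dist (T^[m + 1] x0) (T^[n + 2] x0) ≤
              dist (T^[m + 1] x0) (T^[n + 1] x0) + dist (T^[n + 1] x0) (T^[n + 2] x0) :=
            dist_triangle _ _ _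
          have c4 : dist (T^[m + 1] x0) (T^[n + 1] x0) = dist (T^[n + 1] x0) (T^[m + 1] x0) :=
            dist_comm _ _
          have c5 : dist (T^[m + 1] x0) (T^[n + 2] x0) = dist (T^[n + 2] x0) (T^[m + 1] x0) :=
            dist_comm _ _
          have cself : dist (T^[n + 1] x0) (T^[n + 1] x0) = 0 := dist_self _
          have hsum : dist (T^[n] x0) (T^[m + 1] x0) + dist (T^[n] x0) (T^[n + 2] x0) +
              dist (T^[m] x0) (T^[n + 1] x0) + dist (T^[m] x0) (T^[n + 2] x0) +
              dist (T^[n + 1] x0) (T^[n + 1] x0) + dist (T^[n + 1] x0) (T^[m + 1] x0) ≤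
              4 * dist (T^[n + 1] x0) (T^[m + 1] x0) + 2 * dist (T^[n] x0) (T^[n + 1] x0) +
              2 * dist (T^[n + 1] x0) (T^[n + 2] x0) + 2 * dist (T^[m] x0) (T^[m + 1] x0) := by
            linarith
          have hmul := mul_le_mul_of_nonneg_left hsum hγ0
          have hcomb := h.trans hmul
          have c1 : dist (T^[n + 1] x0) (T^[n] x0) = dist (T^[n] x0) (T^[n + 1] x0) :=
            dist_comm _ _
          have c2 : dist (T^[n + 2] x0) (T^[n + 1] x0) = dist (T^[n + 1] x0) (T^[n + 2] x0) :=
            dist_comm _ _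
          have c3 : dist (T^[m + 1] x0) (T^[m] x0) = dist (T^[m] x0) (T^[m + 1] x0) :=
            dist_comm _ _
          rw [c1, c2, c3, hCdef, div_mul_eq_mul_div, le_div_iff₀ h2m4]
          have hA : (0:ℝ) ≤ dist (T^[n] x0) (T^[n + 1] x0) := dist_nonneg
          have hB : (0:ℝ) ≤ dist (T^[n + 1] x0) (T^[n + 2] x0) := dist_nonneg
          have hM : (0:ℝ) ≤ dist (T^[m] x0) (T^[m + 1] x0) := dist_nonneg
          nlinarith [hcomb, t1, c5, hA, hB, hM]
    -- Cauchy
    have hcauchy : CauchySeq (fun n : ℕ => T^[n] x0) := by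
      rw [Metric.cauchySeq_iff]
      intro ε hε
      have hε3 : (0:ℝ) < ε / (3 * C) := div_pos hε (by linarith)
      obtain ⟨N, hN⟩ := Metric.tendsto_atTop.mp (hreg x0) (ε / (3 * C)) hε3
      have ha : ∀ k, N ≤ k → dist (T^[k + 1] x0) (T^[k] x0) < ε / (3 * C) := by
        intro k hk
        have := hN k hk
        rw [Real.dist_eq, sub_zero] at this
        exact lt_of_le_of_lt (le_abs_self _) this
      refine ⟨N + 1, fun m hm n hn => ?_⟩
      obtain ⟨m', rfl⟩ : ∃ m', m = m' + 1 := ⟨m - 1, by omega⟩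
      obtain ⟨n', rfl⟩ : ∃ n', n = n' + 1 := ⟨n - 1, by omega⟩
      have b1 := ha m' (by omega)
      have b2 := ha (m' + 1) (by omega)
      have b3 := ha n' (by omega)
      calc dist (T^[m' + 1] x0) (T^[n' + 1] x0) ≤
          C * (dist (T^[m' + 1] x0) (T^[m'] x0) + dist (T^[m' + 2] x0) (T^[m' + 1] x0) +
               dist (T^[n' + 1] x0) (T^[n'] x0)) := key m' n'
        _ < C * (3 * (ε / (3 * C))) := by
            apply mul_lt_mul_of_pos_left _ Cpos
            have b2' : dist (T^[m' + 2] x0) (T^[m' + 1] x0) < ε / (3 * C) := b2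
            linarith
        _ = ε := by field_simp
    obtain ⟨ξ, hξ⟩ := cauchySeq_tendsto_of_complete hcauchy
    refine ⟨ξ, ?_⟩
    by_contra hfixξ
    have hδ : 0 < dist ξ (T ξ) := dist_pos.mpr (fun h => hfixξ h.symm)
    obtain ⟨N1, hN1⟩ := Metric.tendsto_atTop.mp (hreg x0) (dist ξ (T ξ) / 100) (by linarith)
    obtain ⟨N2, hN2⟩ := Metric.tendsto_atTop.mp hξ (dist ξ (T ξ) / 100) (by linarith)
    have ha : ∀ k, N1 ≤ k → dist (T^[k + 1] x0) (T^[k] x0) < dist ξ (T ξ) / 100 := by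
      intro k hk
      have := hN1 k hk
      rw [Real.dist_eq, sub_zero] at this
      exact lt_of_le_of_lt (le_abs_self _) this
    set N := max N1 N2 with hNdef
    have aN : dist (T^[N + 1] x0) (T^[N] x0) < dist ξ (T ξ) / 100 := ha N (le_max_left _ _)
    have aN1 : dist (T^[N + 2] x0) (T^[N + 1] x0) < dist ξ (T ξ) / 100 :=
      ha (N + 1) (by omega)
    have dN : dist (T^[N] x0) ξ < dist ξ (T ξ) / 100 := hN2 N (le_max_right _ _)
    have dN1 : dist (T^[N + 1] x0) ξ < dist ξ (T ξ) / 100 := hN2 (N + 1) (by omega)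
    have dN2 : dist (T^[N + 2] x0) ξ < dist ξ (T ξ) / 100 := hN2 (N + 2) (by omega)
    have hne1 : T^[N] x0 ≠ ξ := by
      intro h
      have e : T^[N + 1] x0 = T (T^[N] x0) := Function.iterate_succ_apply' T N x0
      have h2 : dist (T^[N + 1] x0) (T^[N] x0) = dist ξ (T ξ) := by rw [e, h, dist_comm]
      linarith
    have hne2 : T^[N + 1] x0 ≠ ξ := by
      intro h
      have e : T^[N + 2] x0 = T (T^[N + 1] x0) := Function.iterate_succ_apply' T (N + 1) x0
      have h2 : dist (T^[N + 2] x0) (T^[N + 1] x0) = dist ξ (T ξ) := by rw [e, h, dist_comm]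
      linarith
    have h := hT (T^[N] x0) (T^[N + 1] x0) ξ (hcons N).symm hne1 hne2
    rw [show T (T^[N] x0) = T^[N + 1] x0 from (Function.iterate_succ_apply' T N x0).symm,
        show T (T^[N + 1] x0) = T^[N + 2] x0 from
          (Function.iterate_succ_apply' T (N + 1) x0).symm] at h
    have tA : dist (T^[N] x0) (T^[N + 2] x0) ≤
        dist (T^[N] x0) (T^[N + 1] x0) + dist (T^[N + 1] x0) (T^[N + 2] x0) :=
      dist_triangle _ _ _
    have tB : dist (T^[N] x0) (T ξ) ≤ dist (T^[N] x0) ξ + dist ξ (T ξ) := dist_triangle _ _ _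
    have tC : dist (T^[N + 1] x0) (T ξ) ≤ dist (T^[N + 1] x0) ξ + dist ξ (T ξ) :=
      dist_triangle _ _ _
    have tD : dist ξ (T ξ) ≤ dist ξ (T^[N + 1] x0) + dist (T^[N + 1] x0) (T ξ) :=
      dist_triangle _ _ _
    have cA : dist (T^[N] x0) (T^[N + 1] x0) = dist (T^[N + 1] x0) (T^[N] x0) := dist_comm _ _
    have cB : dist (T^[N + 1] x0) (T^[N + 2] x0) = dist (T^[N + 2] x0) (T^[N + 1] x0) :=
      dist_comm _ _
    have cC : dist ξ (T^[N + 1] x0) = dist (T^[N + 1] x0) ξ := dist_comm _ _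
    have cD : dist ξ (T^[N + 2] x0) = dist (T^[N + 2] x0) ξ := dist_comm _ _
    have cself : dist (T^[N + 1] x0) (T^[N + 1] x0) = 0 := dist_self _
    have hsum : dist (T^[N] x0) (T^[N + 2] x0) + dist (T^[N] x0) (T ξ) +
        dist (T^[N + 1] x0) (T^[N + 1] x0) + dist (T^[N + 1] x0) (T ξ) +
        dist ξ (T^[N + 1] x0) + dist ξ (T^[N + 2] x0) ≤
        2 * dist ξ (T ξ) + 6 * (dist ξ (T ξ) / 100) := by
      linarith
    have hmul := mul_le_mul_of_nonneg_left hsum hγ0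
    have hcomb := h.trans hmul
    have hγδ : γ * (2 * dist ξ (T ξ) + 6 * (dist ξ (T ξ) / 100)) <
        (1/3) * (2 * dist ξ (T ξ) + 6 * (dist ξ (T ξ) / 100)) :=
      mul_lt_mul_of_pos_right hγ1 (by linarith)
    have hL1 : (0:ℝ) ≤ dist (T^[N + 1] x0) (T^[N + 2] x0) := dist_nonneg
    have hL2 : (0:ℝ) ≤ dist (T^[N + 2] x0) (T ξ) := dist_nonneg
    linarith
  · -- at most two fixed points
    intro x y z hx hy hz
    by_contra hcon
    push_neg at hcon
    obtain ⟨h1, h2, h3'⟩ := hcon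
    have h := hT x y z h1 h2 h3'
    rw [hx, hy, hz] at h
    have e1 : dist y x = dist x y := dist_comm _ _
    have e2 : dist z x = dist x z := dist_comm _ _
    have e3 : dist z y = dist y z := dist_comm _ _
    rw [e1, e2, e3] at h
    have hpos : 0 < dist x y := dist_pos.mpr h1
    have hS : 0 < dist x y + dist y z + dist x z := by
      have : (0:ℝ) ≤ dist y z := dist_nonneg
      have : (0:ℝ) ≤ dist x z := dist_nonneg
      linarith [dist_nonneg (x := y) (y := z), dist_nonneg (x := x) (y := z)]
    have hmul : (2 * γ) * (dist x y + dist y z + dist x z) <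
        (2/3) * (dist x y + dist y z + dist x z) := by
      apply mul_lt_mul_of_pos_right (by linarith) hS
    linarith
end

section
/- Let (X,d) be a metric space with at least 3 points and let T : X → X be a generalized Chatterjea type mapping (with some constant γ ∈ [0, 1/3)). If x* ∈ X is a fixed point of T, then T is continuous at x*. -/
/-- A generalized Chatterjea type mapping is continuous at each of its fixed
points. -/
theorem generalized_chatterjea_continuous_at_fixed_point
    {X : Type*} [MetricSpace X]
    (h3 : ∃ x y z : X, x ≠ y ∧ x ≠ z ∧ y ≠ z)
    (T : X → X)
    (γ : ℝ) (hγ0 : 0 ≤ γ) (hγ1 : γ < 1 / 3)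
    (hT : ∀ x y z : X, x ≠ y → x ≠ z → y ≠ z →
      dist (T x) (T y) + dist (T y) (T z) + dist (T x) (T z) ≤
        γ * (dist x (T y) + dist x (T z) + dist y (T x) + dist y (T z) +
             dist z (T x) + dist z (T y)))
    (xstar : X) (hfix : T xstar = xstar) :
    ContinuousAt T xstar := by
  rw [Metric.continuousAt_iff]
  intro ε hε
  by_cases hiso : ∃ δ > 0, ∀ z : X, dist z xstar < δ → z = xstar
  · obtain ⟨δ, hδ, h⟩ := hiso
    exact ⟨δ, hδ, fun {x} hx => by rw [h x hx]; simpa using hε⟩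
  · push_neg at hiso
    refine ⟨ε / 4, by positivity, fun {x} hx => ?_⟩
    by_cases hxe : x = xstar
    · rw [hxe]; simpa using hε
    · obtain ⟨z, hz1, hz2⟩ :=
        hiso (min (ε / 4) (dist x xstar)) (lt_min (by positivity) (dist_pos.mpr hxe))
      have hz3 : dist z xstar < ε / 4 := lt_of_lt_of_le hz1 (min_le_left _ _)
      have hz4 : dist z xstar < dist x xstar := lt_of_lt_of_le hz1 (min_le_right _ _)
      have hzx : z ≠ x := fun h => by rw [h] at hz4; exact lt_irrefl _ hz4
      have key := hT x xstar z hxe (fun h => hzx h.symm) (fun h => hz2 h.symm)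
      rw [hfix] at key
      have t1 : dist x (T z) ≤ dist x xstar + dist xstar (T z) := dist_triangle _ _ _
      have t2 : dist z (T x) ≤ dist z xstar + dist xstar (T x) := dist_triangle _ _ _
      have c1 : dist (T x) xstar = dist xstar (T x) := dist_comm _ _
      have c2 : dist xstar (T z) = dist (T z) xstar := dist_comm _ _
      have nn1 : 0 ≤ dist (T x) (T z) := dist_nonneg
      have nn2 : 0 ≤ dist xstar (T z) := dist_nonneg
      rw [hfix]
      nlinarith [dist_nonneg (x := x) (y := xstar), dist_nonneg (x := z) (y := xstar)]
end

section
/- Let (X,d) be a metric space with at least 3 points and let T : X → X satisfy: (i) T has no periodic points of prime period 2 (for every x ∈ X, T(Tx) = x implies Tx = x); (ii) T is a generalized Chatterjea type mapping (with some constant γ ∈ [0, 1/3)); (iii) T is continuous at a point x* ∈ X; (iv) there exists x₀ ∈ X such that the sequence of iterates xₙ = T(x_{n-1}), n = 1, 2, …, has a subsequence x_{n_k} converging to x*. Then x* is a fixed point of T, and the set of fixed points of T has at most two elements. -/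
/-- Fixed point theorem for generalized Chatterjea type mappings without
completeness: if T has no periodic points of prime period 2, is a generalized Chatterjea
type mapping, is continuous at x*, and some iteration sequence has a subsequence
converging to x*, then x* is a fixed point; the set of fixed points has at most two
elements. -/
theorem generalized_chatterjea_fixed_point_incomplete
    {X : Type*} [MetricSpace X]
    (h3 : ∃ x y z : X, x ≠ y ∧ x ≠ z ∧ y ≠ z)
    (T : X → X)
    (hper : ∀ x : X, T (T x) = x → T x = x)
    (γ : ℝ) (hγ0 : 0 ≤ γ) (hγ1 : γ < 1 / 3)
    (hT : ∀ x y z : X, x ≠ y → x ≠ z → y ≠ z →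
      dist (T x) (T y) + dist (T y) (T z) + dist (T x) (T z) ≤
        γ * (dist x (T y) + dist x (T z) + dist y (T x) + dist y (T z) +
             dist z (T x) + dist z (T y)))
    (xstar : X) (hcont : ContinuousAt T xstar)
    (x : ℕ → X) (hiter : ∀ n : ℕ, x (n + 1) = T (x n))
    (φ : ℕ → ℕ) (hφ : StrictMono φ)
    (hlim : Filter.Tendsto (fun k => x (φ k)) Filter.atTop (nhds xstar)) :
    T xstar = xstar ∧
    (∀ u v w : X, T u = u → T v = v → T w = w → u = v ∨ u = w ∨ v = w) := by
  constructor
  · -- x* is a fixed point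
    by_cases hc : ∃ N, x (N + 1) = x N
    · -- eventually constant sequence
      obtain ⟨N, hN⟩ := hc
      have key : ∀ m, x (N + m) = x N := by
        intro m
        induction m with
        | zero => rfl
        | succ m ih =>
          have : N + (m + 1) = (N + m) + 1 := by ring
          rw [this, hiter, ih, ← hiter, hN]
      have hev : ∀ᶠ k in Filter.atTop, x (φ k) = x N := by
        refine Filter.eventually_atTop.mpr ⟨N, fun k hk => ?_⟩
        have hNk : N ≤ φ k := le_trans hk (hφ.le_apply)
        obtain ⟨m, hm⟩ := Nat.exists_eq_add_of_le hNk
        rw [hm]; exact key m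
      have hlim2 : Filter.Tendsto (fun k => x (φ k)) Filter.atTop (nhds (x N)) :=
        Filter.Tendsto.congr' (Filter.EventuallyEq.symm hev) tendsto_const_nhds
      have hxs : xstar = x N := tendsto_nhds_unique hlim hlim2
      rw [hxs, ← hiter, hN]
    · push_neg at hc
      have h2 : ∀ n, x (n + 2) ≠ x n := by
        intro n h
        apply hc n
        have hTT : T (T (x n)) = x n := by
          rw [← hiter, ← hiter]; exact h
        have := hper (x n) hTT
        rw [← hiter] at this
        exact this
      set r : ℝ := γ / (1 - γ) with hr
      have h1γ : (0:ℝ) < 1 - γ := by linarith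
      have hr0 : 0 ≤ r := div_nonneg hγ0 h1γ.le
      have hr1 : r < 1 := by
        rw [hr, div_lt_one h1γ]; linarith
      set s : ℕ → ℝ := fun n =>
        dist (x n) (x (n+1)) + dist (x (n+1)) (x (n+2)) + dist (x n) (x (n+2)) with hs
      have hs0 : ∀ n, 0 ≤ s n := by
        intro n; simp only [hs]; positivity
      have hstep : ∀ n, s (n + 1) ≤ r * s n := by
        intro n
        have h := hT (x n) (x (n+1)) (x (n+2)) (hc n).symm (h2 n).symm (hc (n+1)).symm
        have e1 : T (x n) = x (n+1) := (hiter n).symm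
        have e2 : T (x (n+1)) = x (n+2) := (hiter (n+1)).symm
        have e3 : T (x (n+2)) = x (n+3) := (hiter (n+2)).symm
        rw [e1, e2, e3] at h
        have tri : dist (x n) (x (n+3)) ≤
            dist (x n) (x (n+1)) + dist (x (n+1)) (x (n+2)) + dist (x (n+2)) (x (n+3)) :=
          dist_triangle4 _ _ _ _
        have c1 : dist (x (n+1)) (x (n+1)) = 0 := dist_self _
        have c2 : dist (x (n+2)) (x (n+2)) = 0 := dist_self _
        have c3 : dist (x (n+2)) (x (n+1)) = dist (x (n+1)) (x (n+2)) := dist_comm _ _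
        have key : (1 - γ) * s (n+1) ≤ γ * s n := by
          simp only [hs]
          have e4 : n + 1 + 1 = n + 2 := by ring
          have e5 : n + 1 + 2 = n + 3 := by ring
          rw [e4, e5]
          nlinarith [h, tri, dist_nonneg (x := x (n+1)) (y := x (n+3))]
        rw [hr, div_mul_eq_mul_div, le_div_iff₀ h1γ]
        linarith [key]
      have hbound : ∀ n, s n ≤ s 0 * r ^ n := by
        intro n
        induction n with
        | zero => simp
        | succ n ih =>
          calc s (n+1) ≤ r * s n := hstep n
            _ ≤ r * (s 0 * r ^ n) := by
                exact mul_le_mul_of_nonneg_left ih hr0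
            _ = s 0 * r ^ (n+1) := by ring
      have hgeo : Filter.Tendsto (fun n => s 0 * r ^ n) Filter.atTop (nhds 0) := by
        have := tendsto_pow_atTop_nhds_zero_of_lt_one hr0 hr1
        simpa using this.const_mul (s 0)
      have hstend : Filter.Tendsto s Filter.atTop (nhds 0) :=
        squeeze_zero hs0 hbound hgeo
      have hdtend : Filter.Tendsto (fun n => dist (x n) (x (n+1))) Filter.atTop (nhds 0) := by
        refine squeeze_zero (fun n => dist_nonneg) (fun n => ?_) hstend
        simp only [hs]
        have := dist_nonneg (x := x (n+1)) (y := x (n+2))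
        have := dist_nonneg (x := x n) (y := x (n+2))
        linarith
      have hφtop : Filter.Tendsto φ Filter.atTop Filter.atTop := hφ.tendsto_atTop
      have hd2 : Filter.Tendsto (fun k => dist (x (φ k)) (x (φ k + 1))) Filter.atTop (nhds 0) :=
        hdtend.comp hφtop
      have hlimd : Filter.Tendsto (fun k => dist (x (φ k)) xstar) Filter.atTop (nhds 0) :=
        tendsto_iff_dist_tendsto_zero.mp hlim
      have hnext : Filter.Tendsto (fun k => x (φ k + 1)) Filter.atTop (nhds xstar) := by
        rw [tendsto_iff_dist_tendsto_zero]
        have hsum : Filter.Tendsto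
            (fun k => dist (x (φ k)) (x (φ k + 1)) + dist (x (φ k)) xstar)
            Filter.atTop (nhds 0) := by
          simpa using hd2.add hlimd
        refine squeeze_zero (fun k => dist_nonneg) (fun k => ?_) hsum
        calc dist (x (φ k + 1)) xstar
            ≤ dist (x (φ k + 1)) (x (φ k)) + dist (x (φ k)) xstar := dist_triangle _ _ _
          _ = dist (x (φ k)) (x (φ k + 1)) + dist (x (φ k)) xstar := by rw [dist_comm]
      have hTcomp : Filter.Tendsto (fun k => T (x (φ k))) Filter.atTop (nhds (T xstar)) :=
        hcont.tendsto.comp hlim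
      have heq : (fun k => T (x (φ k))) = fun k => x (φ k + 1) :=
        funext fun k => (hiter (φ k)).symm
      rw [heq] at hTcomp
      exact tendsto_nhds_unique hTcomp hnext
  · -- at most two fixed points
    intro u v w hu hv hw
    by_contra hcon
    push_neg at hcon
    obtain ⟨huv, huw, hvw⟩ := hcon
    have h := hT u v w huv huw hvw
    rw [hu, hv, hw] at h
    have d1 : dist v u = dist u v := dist_comm _ _
    have d2 : dist w u = dist u w := dist_comm _ _
    have d3 : dist w v = dist v w := dist_comm _ _
    have hpos : 0 < dist u v := dist_pos.mpr huv
    have hpos2 : 0 ≤ dist v w := dist_nonneg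
    have hpos3 : 0 ≤ dist u w := dist_nonneg
    have hS : 0 < dist u v + dist v w + dist u w := by linarith
    nlinarith [mul_pos (show (0:ℝ) < 1 - 2*γ by linarith) hS]
end

section
/- Let (X,d) be a metric space with at least 3 points and let T : X → X be continuous on X. Suppose: (i) T has no periodic points of prime period 2 (for every x ∈ X, T(Tx) = x implies Tx = x); (ii) there exist a constant γ ∈ [0, 1/3) and an everywhere dense subset M ⊆ X such that d(Tx,Ty) + d(Ty,Tz) + d(Tx,Tz) ≤ γ(d(x,Ty) + d(x,Tz) + d(y,Tx) + d(y,Tz) + d(z,Tx) + d(z,Ty)) for all three pairwise distinct points x, y, z ∈ M; (iii) there exists x₀ ∈ X such that the sequence of iterates xₙ = T(x_{n-1}), n = 1, 2, …, has a subsequence x_{n_k} converging to x* ∈ X. Then x* is a fixed point of T, and the set of fixed points of T has at most two elements. -/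
open Filter Topology

lemma chatterjea_ext {X : Type*} [MetricSpace X]
    (T : X → X) (hcont : Continuous T)
    (γ : ℝ) (M : Set X) (hM : Dense M)
    (hT : ∀ x ∈ M, ∀ y ∈ M, ∀ z ∈ M, x ≠ y → x ≠ z → y ≠ z →
      dist (T x) (T y) + dist (T y) (T z) + dist (T x) (T z) ≤
        γ * (dist x (T y) + dist x (T z) + dist y (T x) + dist y (T z) +
             dist z (T x) + dist z (T y))) :
    ∀ x y z : X, x ≠ y → x ≠ z → y ≠ z →
      dist (T x) (T y) + dist (T y) (T z) + dist (T x) (T z) ≤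
        γ * (dist x (T y) + dist x (T z) + dist y (T x) + dist y (T z) +
             dist z (T x) + dist z (T y)) := by
  intro x y z hxy hxz hyz
  obtain ⟨u, huM, hut⟩ := mem_closure_iff_seq_limit.1 (hM x)
  obtain ⟨v, hvM, hvt⟩ := mem_closure_iff_seq_limit.1 (hM y)
  obtain ⟨w, hwM, hwt⟩ := mem_closure_iff_seq_limit.1 (hM z)
  have hTu : Tendsto (fun n => T (u n)) atTop (𝓝 (T x)) := (hcont.tendsto x).comp hut
  have hTv : Tendsto (fun n => T (v n)) atTop (𝓝 (T y)) := (hcont.tendsto y).comp hvt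
  have hTw : Tendsto (fun n => T (w n)) atTop (𝓝 (T z)) := (hcont.tendsto z).comp hwt
  have hL : Tendsto (fun n => dist (T (u n)) (T (v n)) + dist (T (v n)) (T (w n)) +
      dist (T (u n)) (T (w n))) atTop
      (𝓝 (dist (T x) (T y) + dist (T y) (T z) + dist (T x) (T z))) :=
    ((hTu.dist hTv).add (hTv.dist hTw)).add (hTu.dist hTw)
  have hR : Tendsto (fun n => γ * (dist (u n) (T (v n)) + dist (u n) (T (w n)) +
      dist (v n) (T (u n)) + dist (v n) (T (w n)) + dist (w n) (T (u n)) +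
      dist (w n) (T (v n)))) atTop
      (𝓝 (γ * (dist x (T y) + dist x (T z) + dist y (T x) + dist y (T z) +
             dist z (T x) + dist z (T y)))) :=
    Tendsto.const_mul γ
      ((((((hut.dist hTv).add (hut.dist hTw)).add (hvt.dist hTu)).add
        (hvt.dist hTw)).add (hwt.dist hTu)).add (hwt.dist hTv))
  refine le_of_tendsto_of_tendsto hL hR ?_
  have h1 : ∀ᶠ n in atTop, u n ≠ v n := by
    filter_upwards [(hut.dist hvt).eventually_ne (dist_ne_zero.2 hxy)] with n h
    exact fun he => h (by simp [he, dist_self])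
  have h2 : ∀ᶠ n in atTop, u n ≠ w n := by
    filter_upwards [(hut.dist hwt).eventually_ne (dist_ne_zero.2 hxz)] with n h
    exact fun he => h (by simp [he, dist_self])
  have h3 : ∀ᶠ n in atTop, v n ≠ w n := by
    filter_upwards [(hvt.dist hwt).eventually_ne (dist_ne_zero.2 hyz)] with n h
    exact fun he => h (by simp [he, dist_self])
  filter_upwards [h1, h2, h3] with n hn1 hn2 hn3
  exact hT (u n) (huM n) (v n) (hvM n) (w n) (hwM n) hn1 hn2 hn3

/-- Fixed point theorem for continuous mappings satisfying the generalized
Chatterjea condition on an everywhere dense subset: if T has no periodic points of prime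
period 2 and some iteration sequence has a subsequence converging to x*, then x* is a
fixed point; the set of fixed points has at most two elements. -/
theorem generalized_chatterjea_on_dense_fixed_point
    {X : Type*} [MetricSpace X]
    (h3 : ∃ x y z : X, x ≠ y ∧ x ≠ z ∧ y ≠ z)
    (T : X → X) (hcont : Continuous T)
    (hper : ∀ x : X, T (T x) = x → T x = x)
    (γ : ℝ) (hγ0 : 0 ≤ γ) (hγ1 : γ < 1 / 3)
    (M : Set X) (hM : Dense M)
    (hT : ∀ x ∈ M, ∀ y ∈ M, ∀ z ∈ M, x ≠ y → x ≠ z → y ≠ z →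
      dist (T x) (T y) + dist (T y) (T z) + dist (T x) (T z) ≤
        γ * (dist x (T y) + dist x (T z) + dist y (T x) + dist y (T z) +
             dist z (T x) + dist z (T y)))
    (x : ℕ → X) (hiter : ∀ n : ℕ, x (n + 1) = T (x n))
    (xstar : X)
    (φ : ℕ → ℕ) (hφ : StrictMono φ)
    (hlim : Filter.Tendsto (fun k => x (φ k)) Filter.atTop (nhds xstar)) :
    T xstar = xstar ∧
    (∀ u v w : X, T u = u → T v = v → T w = w → u = v ∨ u = w ∨ v = w) := by
  have hext := chatterjea_ext T hcont γ M hM hT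
  -- the distance sequence
  set a : ℕ → ℝ := fun n => dist (x n) (x (n + 1)) with ha
  -- two-step contraction
  have key : ∀ n : ℕ, a (n + 2) ≤ (2 * γ) * a n := by
    intro n
    by_cases h01 : x n = x (n + 1)
    · have e1 : x (n + 2) = x (n + 1) := by
        rw [hiter (n+1), ← h01, ← hiter n]; exact h01.symm
      have e2 : x (n + 3) = x (n + 2) := by
        rw [show n+3 = (n+2)+1 from rfl, hiter (n+2), e1, ← hiter (n+1)]; exact e1
      have : a (n + 2) = 0 := by simp [ha, show n+2+1 = n+3 from rfl, e2, dist_self]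
      rw [this]
      exact mul_nonneg (by linarith) dist_nonneg
    · by_cases h12 : x (n + 1) = x (n + 2)
      · have e2 : x (n + 3) = x (n + 2) := by
          rw [show n+3 = (n+2)+1 from rfl, hiter (n+2), ← h12, ← hiter (n+1)]
          exact h12.symm
        have : a (n + 2) = 0 := by simp [ha, show n+2+1 = n+3 from rfl, e2, dist_self]
        rw [this]
        exact mul_nonneg (by linarith) dist_nonneg
      · have h02 : x n ≠ x (n + 2) := by
          intro he
          have hTT : T (T (x n)) = x n := by
            rw [← hiter n, ← hiter (n+1)]; exact he.symm
          exact h01 ((hiter n).trans (hper (x n) hTT)).symm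
        have hineq := hext (x n) (x (n+1)) (x (n+2)) h01 h02 h12
        rw [← hiter n, ← hiter (n+1), ← (show x (n+3) = T (x (n+2)) from hiter (n+2))] at hineq
        have t1 : dist (x n) (x (n+2)) ≤ dist (x n) (x (n+1)) + dist (x (n+1)) (x (n+2)) :=
          dist_triangle _ _ _
        have t2 : dist (x n) (x (n+3)) ≤ dist (x n) (x (n+1)) + dist (x (n+1)) (x (n+3)) :=
          dist_triangle _ _ _
        have hc : dist (x (n+2)) (x (n+1)) = dist (x (n+1)) (x (n+2)) := dist_comm _ _
        have hb : (0:ℝ) ≤ dist (x (n+1)) (x (n+3)) := dist_nonneg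
        have hb2 : (0:ℝ) ≤ dist (x (n+1)) (x (n+2)) := dist_nonneg
        simp only [ha]
        simp only [dist_self] at hineq
        have : n + 2 + 1 = n + 3 := rfl
        rw [this]
        nlinarith [hineq, t1, t2]
  -- a tends to 0
  have h2γ0 : (0:ℝ) ≤ 2 * γ := by linarith
  have h2γ1 : (2:ℝ) * γ < 1 := by linarith
  have hbound : ∀ n : ℕ, a n ≤ (2*γ) ^ (n / 2) * max (a 0) (a 1) := by
    intro n
    induction n using Nat.strong_induction_on with
    | _ n ih =>
      match n with
      | 0 => simpa using le_max_left (a 0) (a 1)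
      | 1 => simpa using le_max_right (a 0) (a 1)
      | (m + 2) =>
        have h1 : a (m + 2) ≤ (2*γ) * a m := key m
        have h2 : a m ≤ (2*γ) ^ (m / 2) * max (a 0) (a 1) := ih m (by omega)
        have h3 : (m + 2) / 2 = m / 2 + 1 := by omega
        rw [h3, pow_succ]
        calc a (m+2) ≤ (2*γ) * a m := h1
          _ ≤ (2*γ) * ((2*γ) ^ (m / 2) * max (a 0) (a 1)) :=
            mul_le_mul_of_nonneg_left h2 h2γ0
          _ = (2*γ) ^ (m / 2) * (2*γ) * max (a 0) (a 1) := by ring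
  have hpow : Tendsto (fun n : ℕ => (2*γ) ^ (n / 2) * max (a 0) (a 1)) atTop (𝓝 0) := by
    have hp : Tendsto (fun k : ℕ => (2*γ) ^ k) atTop (𝓝 0) :=
      tendsto_pow_atTop_nhds_zero_of_lt_one h2γ0 h2γ1
    have hd : Tendsto (fun n : ℕ => n / 2) atTop atTop :=
      tendsto_atTop_atTop.2 (fun b => ⟨2 * b, fun n hn => by omega⟩)
    simpa using (hp.comp hd).mul_const (max (a 0) (a 1))
  have ha0 : Tendsto a atTop (𝓝 0) :=
    squeeze_zero (fun n => dist_nonneg) hbound hpow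
  -- x* is a fixed point
  have hφtop : Tendsto φ atTop atTop := hφ.tendsto_atTop
  have haφ : Tendsto (fun k => a (φ k)) atTop (𝓝 0) := ha0.comp hφtop
  have hTlim : Tendsto (fun k => T (x (φ k))) atTop (𝓝 (T xstar)) :=
    (hcont.tendsto xstar).comp hlim
  have hdist : Tendsto (fun k => dist (x (φ k)) (T (x (φ k)))) atTop
      (𝓝 (dist xstar (T xstar))) := hlim.dist hTlim
  have heq : (fun k => dist (x (φ k)) (T (x (φ k)))) = fun k => a (φ k) := by
    funext k; simp [ha, hiter (φ k)]
  rw [heq] at hdist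
  have hfix : dist xstar (T xstar) = 0 := tendsto_nhds_unique hdist haφ
  have hfix' : T xstar = xstar := (dist_eq_zero.1 hfix).symm
  refine ⟨hfix', ?_⟩
  -- at most two fixed points
  intro u v w hu hv hw
  by_contra hcon
  push_neg at hcon
  obtain ⟨huv, huw, hvw⟩ := hcon
  have hineq := hext u v w huv huw hvw
  rw [hu, hv, hw] at hineq
  have d1 : 0 < dist u v := dist_pos.2 huv
  have d2 : (0:ℝ) ≤ dist v w := dist_nonneg
  have d3 : (0:ℝ) ≤ dist u w := dist_nonneg
  have c1 : dist v u = dist u v := dist_comm _ _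
  have c2 : dist w u = dist u w := dist_comm _ _
  have c3 : dist w v = dist v w := dist_comm _ _
  nlinarith [hineq]
end

section
/- Let (X,d) be a metric space with at least 3 points, let T : X → X be continuous on X, let γ ∈ [0, 1/3), and let M ⊆ X be an everywhere dense subset such that d(Tx,Ty) + d(Ty,Tz) + d(Tx,Tz) ≤ γ(d(x,Ty) + d(x,Tz) + d(y,Tx) + d(y,Tz) + d(z,Tx) + d(z,Ty)) holds for all three pairwise distinct points x, y, z ∈ M. Then the same inequality holds for all three pairwise distinct points x, y, z ∈ X; i.e., T is a generalized Chatterjea type mapping on X with the same constant γ. -/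
/-- If a continuous mapping T satisfies the generalized Chatterjea condition
on an everywhere dense subset M of X, then it satisfies it on all of X with the same
constant γ. -/
theorem generalized_chatterjea_extends_from_dense
    {X : Type*} [MetricSpace X]
    (h3 : ∃ x y z : X, x ≠ y ∧ x ≠ z ∧ y ≠ z)
    (T : X → X) (hcont : Continuous T)
    (γ : ℝ) (hγ0 : 0 ≤ γ) (hγ1 : γ < 1 / 3)
    (M : Set X) (hM : Dense M)
    (hT : ∀ x ∈ M, ∀ y ∈ M, ∀ z ∈ M, x ≠ y → x ≠ z → y ≠ z →
      dist (T x) (T y) + dist (T y) (T z) + dist (T x) (T z) ≤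
        γ * (dist x (T y) + dist x (T z) + dist y (T x) + dist y (T z) +
             dist z (T x) + dist z (T y))) :
    ∀ x y z : X, x ≠ y → x ≠ z → y ≠ z →
      dist (T x) (T y) + dist (T y) (T z) + dist (T x) (T z) ≤
        γ * (dist x (T y) + dist x (T z) + dist y (T x) + dist y (T z) +
             dist z (T x) + dist z (T y)) := by
  intro x y z hxy hxz hyz
  set U : Set (X × X × X) :=
    {q | q.1 ≠ q.2.1 ∧ q.1 ≠ q.2.2 ∧ q.2.1 ≠ q.2.2} with hUdef
  have hUopen : IsOpen U := by
    apply IsOpen.and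
    · exact isOpen_ne_fun continuous_fst (continuous_fst.comp continuous_snd)
    apply IsOpen.and
    · exact isOpen_ne_fun continuous_fst (continuous_snd.comp continuous_snd)
    · exact isOpen_ne_fun (continuous_fst.comp continuous_snd)
        (continuous_snd.comp continuous_snd)
  have hMdense : Dense (M ×ˢ (M ×ˢ M) : Set (X × X × X)) := hM.prod (hM.prod hM)
  set S : Set (X × X × X) := U ∩ (M ×ˢ (M ×ˢ M)) with hSdef
  have hpU : (x, y, z) ∈ U := ⟨hxy, hxz, hyz⟩
  have hpcl : (x, y, z) ∈ closure S :=
    hMdense.open_subset_closure_inter hUopen hpU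
  have hne : Filter.NeBot (nhdsWithin (x, y, z) S) :=
    mem_closure_iff_nhdsWithin_neBot.mp hpcl
  set f : X × X × X → ℝ := fun q =>
    dist (T q.1) (T q.2.1) + dist (T q.2.1) (T q.2.2) + dist (T q.1) (T q.2.2) with hfdef
  set g : X × X × X → ℝ := fun q =>
    γ * (dist q.1 (T q.2.1) + dist q.1 (T q.2.2) + dist q.2.1 (T q.1) +
         dist q.2.1 (T q.2.2) + dist q.2.2 (T q.1) + dist q.2.2 (T q.2.1)) with hgdef
  have hfc : Continuous f := by fun_prop
  have hgc : Continuous g := by fun_prop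
  have hfl : Filter.Tendsto f (nhdsWithin (x, y, z) S) (nhds (f (x, y, z))) :=
    (hfc.tendsto _).mono_left nhdsWithin_le_nhds
  have hgl : Filter.Tendsto g (nhdsWithin (x, y, z) S) (nhds (g (x, y, z))) :=
    (hgc.tendsto _).mono_left nhdsWithin_le_nhds
  have hev : ∀ᶠ q in nhdsWithin (x, y, z) S, f q ≤ g q := by
    filter_upwards [eventually_mem_nhdsWithin] with q hq
    obtain ⟨⟨h1, h2, h3'⟩, hq1, hq2, hq3⟩ := hq
    exact hT q.1 hq1 q.2.1 hq2 q.2.2 hq3 h1 h2 h3'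
  exact le_of_tendsto_of_tendsto hfl hgl hev
end

section
/- Let (X,d) be a metric space with at least 3 points and let T : X → X be a generalized Chatterjea type mapping with constant γ ∈ [0, 1/3). Let x, y, z, w ∈ X with y = Tx, z = Ty, w = Tz, and suppose x, y, z are pairwise distinct. Then d(z,w) ≤ (2γ/(1-γ)) · max{d(x,y), d(y,z)}, where 2γ/(1-γ) ∈ [0, 1). -/
/-- The basic iteration estimate for generalized Chatterjea type mappings:
if y = Tx, z = Ty, w = Tz and x, y, z are pairwise distinct, then
d(z,w) ≤ (2γ/(1-γ)) · max{d(x,y), d(y,z)}, with 2γ/(1-γ) ∈ [0,1). -/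
theorem generalized_chatterjea_iteration_estimate
    {X : Type*} [MetricSpace X]
    (h3 : ∃ x y z : X, x ≠ y ∧ x ≠ z ∧ y ≠ z)
    (T : X → X)
    (γ : ℝ) (hγ0 : 0 ≤ γ) (hγ1 : γ < 1 / 3)
    (hT : ∀ x y z : X, x ≠ y → x ≠ z → y ≠ z →
      dist (T x) (T y) + dist (T y) (T z) + dist (T x) (T z) ≤
        γ * (dist x (T y) + dist x (T z) + dist y (T x) + dist y (T z) +
             dist z (T x) + dist z (T y)))
    (x y z w : X) (hy : y = T x) (hz : z = T y) (hw : w = T z)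
    (hxy : x ≠ y) (hxz : x ≠ z) (hyz : y ≠ z) :
    (0 ≤ 2 * γ / (1 - γ) ∧ 2 * γ / (1 - γ) < 1) ∧
    dist z w ≤ 2 * γ / (1 - γ) * max (dist x y) (dist y z) := by
  have h1γ : (0:ℝ) < 1 - γ := by linarith
  have key := hT x y z hxy hxz hyz
  rw [← hy, ← hz, ← hw] at key
  simp only [dist_self] at key
  have t1 : dist x z ≤ dist x y + dist y z := dist_triangle x y z
  have t2 : dist x w ≤ dist x y + dist y w := dist_triangle x y w
  have t3 : dist z w ≤ dist y w + dist y z := by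
    have := dist_triangle z y w
    rw [dist_comm z y] at this; linarith
  rw [dist_comm z y] at key
  have hdzw : (1 - γ) * dist z w ≤ γ * dist x y := by
    nlinarith [mul_le_mul_of_nonneg_left t3 (by linarith : (0:ℝ) ≤ 1 - 2*γ)]
  have hb : dist z w ≤ γ / (1 - γ) * dist x y := by
    rw [div_mul_eq_mul_div, le_div_iff₀ h1γ]; linarith
  refine ⟨⟨div_nonneg (by linarith) h1γ.le, ?_⟩, ?_⟩
  · rw [div_lt_one h1γ]; linarith
  · calc dist z w ≤ γ / (1 - γ) * dist x y := hb
      _ ≤ 2 * γ / (1 - γ) * max (dist x y) (dist y z) := by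
        apply mul_le_mul _ (le_max_left _ _) dist_nonneg (by positivity)
        exact (div_le_div_iff_of_pos_right h1γ).mpr (by linarith)
end

section
/- Let (X,d) be a metric space with at least 3 points and let T : X → X be a generalized Chatterjea type mapping (with some constant γ ∈ [0, 1/3)) that has no periodic points of prime period 2 (for every x ∈ X, T(Tx) = x implies Tx = x). Fix x₀ ∈ X and define xₙ = T(x_{n-1}) for n = 1, 2, …. If no term xₙ (n ≥ 0) is a fixed point of T, then the sequence (xₙ) is a Cauchy sequence; moreover, with α = 2γ/(1-γ) and a = max{d(x₀,x₁), d(x₁,x₂)}, one has d(x_{n-1}, xₙ) ≤ α^{n/2 - 1}·a for all n ≥ 3. -/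
/-- For a generalized Chatterjea type mapping without periodic points of
prime period 2, if no term of the iteration sequence is a fixed point, then the sequence
is Cauchy and satisfies d(x_{n-1}, x_n) ≤ α^{n/2 - 1}·a for all n ≥ 3, where
α = 2γ/(1-γ) and a = max{d(x₀,x₁), d(x₁,x₂)}. -/
theorem generalized_chatterjea_iterates_cauchy
    {X : Type*} [MetricSpace X]
    (h3 : ∃ x y z : X, x ≠ y ∧ x ≠ z ∧ y ≠ z)
    (T : X → X)
    (hper : ∀ x : X, T (T x) = x → T x = x)
    (γ : ℝ) (hγ0 : 0 ≤ γ) (hγ1 : γ < 1 / 3)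
    (hT : ∀ x y z : X, x ≠ y → x ≠ z → y ≠ z →
      dist (T x) (T y) + dist (T y) (T z) + dist (T x) (T z) ≤
        γ * (dist x (T y) + dist x (T z) + dist y (T x) + dist y (T z) +
             dist z (T x) + dist z (T y)))
    (x : ℕ → X) (hiter : ∀ n : ℕ, x (n + 1) = T (x n))
    (hnofix : ∀ n : ℕ, T (x n) ≠ x n) :
    CauchySeq x ∧
    ∀ n : ℕ, 3 ≤ n →
      dist (x (n - 1)) (x n) ≤
        (2 * γ / (1 - γ)) ^ ((n : ℝ) / 2 - 1) * max (dist (x 0) (x 1)) (dist (x 1) (x 2)) := by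
  -- Key two-step contraction inequality
  have hd : ∀ n : ℕ, dist (x (n+2)) (x (n+3)) ≤ 2 * γ * dist (x n) (x (n+1)) := by
    intro n
    have h1 : x (n+1) = T (x n) := hiter n
    have h2 : x (n+2) = T (x (n+1)) := hiter (n+1)
    have h3' : x (n+3) = T (x (n+2)) := hiter (n+2)
    have hne1 : x n ≠ x (n+1) := by
      rw [h1]; exact fun h => hnofix n h.symm
    have hne2 : x (n+1) ≠ x (n+2) := by
      rw [h2]; exact fun h => hnofix (n+1) h.symm
    have hne3 : x n ≠ x (n+2) := by
      intro h
      apply hnofix n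
      apply hper
      rw [← h1, ← h2, ← h]
    have key := hT (x n) (x (n+1)) (x (n+2)) hne1 hne3 hne2
    rw [← h3', ← h2, ← h1] at key
    simp only [dist_self] at key
    rw [dist_comm (x (n+2)) (x (n+1))] at key
    have t1 := dist_triangle (x n) (x (n+1)) (x (n+2))
    have t2 := dist_triangle (x n) (x (n+1)) (x (n+3))
    have hE : (0:ℝ) ≤ dist (x (n+1)) (x (n+3)) := dist_nonneg
    have hD1 : (0:ℝ) ≤ dist (x (n+1)) (x (n+2)) := dist_nonneg
    have p1 : γ * (dist (x n) (x (n+2))) ≤ γ * (dist (x n) (x (n+1)) + dist (x (n+1)) (x (n+2))) :=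
      mul_le_mul_of_nonneg_left t1 hγ0
    have p2 : γ * (dist (x n) (x (n+3))) ≤ γ * (dist (x n) (x (n+1)) + dist (x (n+1)) (x (n+3))) :=
      mul_le_mul_of_nonneg_left t2 hγ0
    have q1 : (0:ℝ) ≤ (1 - 2*γ) * dist (x (n+1)) (x (n+3)) :=
      mul_nonneg (by linarith) hE
    have q2 : (0:ℝ) ≤ (1 - 2*γ) * dist (x (n+1)) (x (n+2)) :=
      mul_nonneg (by linarith) hD1
    nlinarith [key, p1, p2, q1, q2]
  -- γ is positive (else we get an immediate contradiction)
  have hγpos : 0 < γ := by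
    rcases hγ0.lt_or_eq with h | h
    · exact h
    · exfalso
      have h0 := hd 0
      rw [← h] at h0
      have hne : x 2 ≠ x 3 := by
        rw [hiter 2]; exact fun h => hnofix 2 h.symm
      have := dist_pos.mpr hne
      nlinarith [dist_nonneg (x := x 0) (y := x 1)]
  set α : ℝ := 2 * γ / (1 - γ) with hα
  set a : ℝ := max (dist (x 0) (x 1)) (dist (x 1) (x 2)) with ha
  have h1γ : 0 < 1 - γ := by linarith
  have hα0 : 0 < α := by positivity
  have hα1 : α < 1 := by
    rw [hα, div_lt_one h1γ]; linarith
  have h2γα : 2 * γ ≤ α := by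
    rw [hα, le_div_iff₀ h1γ]; nlinarith
  have ha0 : 0 ≤ a := le_trans dist_nonneg (le_max_left _ _)
  have hd2 : ∀ n : ℕ, dist (x (n+2)) (x (n+3)) ≤ α * dist (x n) (x (n+1)) :=
    fun n => le_trans (hd n) (mul_le_mul_of_nonneg_right h2γα dist_nonneg)
  -- main estimate with natural-number exponent
  have hmain : ∀ m : ℕ, dist (x m) (x (m+1)) ≤ α ^ (m / 2) * a := by
    intro m
    induction m using Nat.twoStepInduction with
    | zero => simpa [ha] using le_max_left (dist (x 0) (x 1)) (dist (x 1) (x 2))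
    | one => simpa [ha] using le_max_right (dist (x 0) (x 1)) (dist (x 1) (x 2))
    | more m ih _ =>
      have h1 : dist (x (m+2)) (x (m+3)) ≤ α * (α ^ (m / 2) * a) :=
        le_trans (hd2 m) (mul_le_mul_of_nonneg_left ih hα0.le)
      have h2 : (m + 2) / 2 = m / 2 + 1 := by omega
      calc dist (x (m+2)) (x (m+2+1)) ≤ α * (α ^ (m / 2) * a) := h1
        _ = α ^ ((m+2)/2) * a := by rw [h2, pow_succ]; ring
  constructor
  · -- Cauchy
    set r : ℝ := Real.sqrt α with hr
    have hr0 : 0 < r := Real.sqrt_pos.mpr hα0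
    have hr1 : r < 1 := by
      rw [hr]
      nlinarith [Real.sq_sqrt hα0.le, Real.sqrt_nonneg α]
    apply cauchySeq_of_le_geometric r (a / r) hr1
    intro n
    have h1 : α ^ (n / 2) = r ^ (2 * (n / 2)) := by
      rw [pow_mul, Real.sq_sqrt hα0.le]
    have h2 : r ^ (2 * (n / 2)) ≤ r ^ (n - 1) :=
      pow_le_pow_of_le_one hr0.le hr1.le (by omega)
    have h3 : dist (x n) (x (n+1)) ≤ r ^ (n - 1) * a := by
      calc dist (x n) (x (n+1)) ≤ α ^ (n / 2) * a := hmain n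
        _ = r ^ (2 * (n / 2)) * a := by rw [h1]
        _ ≤ r ^ (n - 1) * a := mul_le_mul_of_nonneg_right h2 ha0
    have h4 : r ^ (n - 1) * r ≤ r ^ n := by
      cases n with
      | zero => simpa using hr1.le
      | succ k => simp [pow_succ]
    calc dist (x n) (x (n+1)) ≤ r ^ (n - 1) * a := h3
      _ ≤ a / r * r ^ n := by
          rw [div_mul_eq_mul_div, le_div_iff₀ hr0]
          calc r ^ (n-1) * a * r = a * (r ^ (n-1) * r) := by ring
            _ ≤ a * r ^ n := mul_le_mul_of_nonneg_left h4 ha0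
            _ = a * r ^ n := rfl
  · -- the explicit bound
    intro n hn
    have hn1 : n - 1 + 1 = n := by omega
    have hmn := hmain (n - 1)
    rw [hn1] at hmn
    have hexp : ((n:ℝ)/2 - 1) ≤ ((n-1)/2 : ℕ) := by
      have h : n ≤ 2 * ((n-1)/2) + 2 := by omega
      have h' : (n:ℝ) ≤ 2 * ((n-1)/2 : ℕ) + 2 := by exact_mod_cast h
      linarith
    have hpow : α ^ ((n-1)/2 : ℕ) ≤ α ^ ((n:ℝ)/2 - 1) := by
      rw [← Real.rpow_natCast α ((n-1)/2)]
      exact Real.rpow_le_rpow_of_exponent_ge hα0 hα1.le hexp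
    calc dist (x (n-1)) (x n) ≤ α ^ ((n-1)/2 : ℕ) * a := hmn
      _ ≤ α ^ ((n:ℝ)/2 - 1) * a := mul_le_mul_of_nonneg_right hpow ha0
end
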